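/- arXiv:1904.12096 — 2 statements merged into one kernel-verified Lean document; each statement's English description precedes it below -/
import Mathlib

section
/- For a bounded linear operator T on a complex Hilbert space with polar decomposition T = U|T|, and for t ∈ [0, 1/2], the t-Aluthge transform satisfies ‖T̃_t‖ ≤ ‖T²‖^t · ‖T‖^{1-2t}. -/
/-!
Write `a = |T|`. For `0 < t ≤ 1/2` one has `T̃_t = (a^t U a^t) a^(1-2t)`, with `‖a U a‖ = ‖T²‖`,
`‖U‖ ≤ 1` and `‖a^(1-2t)‖ ≤ ‖T‖^(1-2t)`, so everything rests on the Heinz-type inequality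
`‖a^t V a^t‖ ≤ ‖a V a‖^t ‖V‖^(1-t)` for `a ≥ 0` and `t ∈ [0, 1]`.

It holds because `g s = ‖a^s V a^s‖` is midpoint log-convex: by the C*-identity `g m ^ 2` is the
spectral radius of a product which, for `m = (s + r) / 2`, cyclically permutes into
`(a^r V a^r) (a^s V a^s)^*`. Log-convexity gives the bound at dyadic `t`, and the crude estimate
`g t ≤ ‖a‖^(2(t - d)) g d` for `d ≤ t` passes it to all `t` by approximating from below.
-/

open scoped NNReal ENNReal
open ContinuousLinearMap

set_option synthInstance.maxHeartbeats 1000000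
set_option maxHeartbeats 1000000

variable {H : Type*} [NormedAddCommGroup H] [InnerProductSpace ℂ H] [CompleteSpace H]

/-- The numerical radius of a bounded linear operator. -/
noncomputable def numRadius (T : H →L[ℂ] H) : ℝ :=
  ⨆ x : {x : H // ‖x‖ = 1}, ‖(inner ℂ (T x) x : ℂ)‖

/-- The modulus `|T| = (T*T)^{1/2}`. -/
noncomputable def opAbs (T : H →L[ℂ] H) : H →L[ℂ] H :=
  CFC.sqrt (adjoint T * T)

/-- The `t`-Aluthge transform `|T|^t U |T|^{1-t}` (with `|T|^0` the support
projection, i.e. `U*U` for the polar partial isometry `U`). -/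
noncomputable def aluthge (T U : H →L[ℂ] H) (t : ℝ≥0) : H →L[ℂ] H :=
  CFC.nnrpow (opAbs T) t * U * CFC.nnrpow (opAbs T) (1 - t)

open Filter Topology

theorem sq_rpow_mul_rpow_midpoint {x y s r : ℝ} (hx : 0 ≤ x) (hy : 0 ≤ y) (hs : 0 ≤ s)
    (hr : 0 ≤ r) (hs1 : s ≤ 1) (hr1 : r ≤ 1) :
    (x ^ ((s + r) / 2) * y ^ (1 - (s + r) / 2)) ^ 2 =
      (x ^ s * y ^ (1 - s)) * (x ^ r * y ^ (1 - r)) := by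
  have hsq : ∀ z p q : ℝ, 0 ≤ z → 0 ≤ p → 0 ≤ q → (z ^ ((p + q) / 2)) ^ 2 = z ^ p * z ^ q := by
    intro z p q hz hp hq
    rw [← Real.rpow_natCast, ← Real.rpow_mul hz, ← Real.rpow_add_of_nonneg hz hp hq]
    norm_num
  rw [mul_pow, hsq x s r hx hs hr, show 1 - (s + r) / 2 = ((1 - s) + (1 - r)) / 2 by ring,
    hsq y _ _ hy (by linarith) (by linarith)]
  ring

theorem le_rpow_mul_rpow_of_sq_midpoint_le_dyadic {G : ℝ → ℝ} (hG : ∀ s, 0 ≤ G s)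
    (hmid : ∀ s r, 0 ≤ s → 0 ≤ r → G ((s + r) / 2) ^ 2 ≤ G s * G r) (n k : ℕ) (hk : k ≤ 2 ^ n) :
    G (k / 2 ^ n) ≤ G 1 ^ ((k : ℝ) / 2 ^ n) * G 0 ^ (1 - (k : ℝ) / 2 ^ n) := by
  induction n generalizing k with
  | zero =>
    interval_cases k <;> simp
  | succ n ih =>
    have hsum : k / 2 + (k + 1) / 2 = k := by omega
    have hmidpt :
        (k : ℝ) / 2 ^ (n + 1) = ((k / 2 : ℕ) / 2 ^ n + ((k + 1) / 2 : ℕ) / 2 ^ n) / 2 := by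
      rw [← add_div, ← Nat.cast_add, hsum, pow_succ, div_div]
    obtain ⟨hi, hj⟩ : k / 2 ≤ 2 ^ n ∧ (k + 1) / 2 ≤ 2 ^ n := by rw [pow_succ] at hk; omega
    have hunit : ∀ i : ℕ, i ≤ 2 ^ n → (0 : ℝ) ≤ i / 2 ^ n ∧ (i : ℝ) / 2 ^ n ≤ 1 := fun i hi =>
      ⟨by positivity, div_le_one_of_le₀ (by exact_mod_cast hi) (by positivity)⟩
    obtain ⟨hi0, hi1⟩ := hunit _ hi
    obtain ⟨hj0, hj1⟩ := hunit _ hj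
    have hinterp_nonneg : ∀ s : ℝ, 0 ≤ G 1 ^ s * G 0 ^ (1 - s) := fun s =>
      mul_nonneg (Real.rpow_nonneg (hG 1) s) (Real.rpow_nonneg (hG 0) _)
    rw [hmidpt, ← sq_le_sq₀ (hG _) (hinterp_nonneg _),
      sq_rpow_mul_rpow_midpoint (hG 1) (hG 0) hi0 hj0 hi1 hj1]
    exact (hmid _ _ hi0 hj0).trans (mul_le_mul (ih _ hi) (ih _ hj) (hG _) (hinterp_nonneg _))

theorem le_rpow_mul_rpow_of_sq_midpoint_le {G : ℝ → ℝ} {C : ℝ} (hC : 0 < C)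
    (hG : ∀ s, 0 ≤ G s) (hmid : ∀ s r, 0 ≤ s → 0 ≤ r → G ((s + r) / 2) ^ 2 ≤ G s * G r)
    (hgrowth : ∀ d t, 0 ≤ d → d ≤ t → G t ≤ C ^ (t - d) * G d) {t : ℝ} (ht0 : 0 ≤ t)
    (ht1 : t ≤ 1) : G t ≤ G 1 ^ t * G 0 ^ (1 - t) := by
  rcases ht0.eq_or_lt with rfl | ht0
  · simp
  rcases ht1.eq_or_lt with rfl | ht1
  · simp
  set d : ℕ → ℝ := fun n => ⌊t * 2 ^ n⌋₊ / 2 ^ n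
  have hd_le : ∀ n, d n ≤ t := fun n =>
    div_le_of_le_mul₀ (by positivity) ht0.le (Nat.floor_le (by positivity))
  have hd_tendsto : Tendsto d atTop (𝓝 t) :=
    (tendsto_nat_floor_mul_div_atTop ht0.le).comp (tendsto_pow_atTop_atTop_of_one_lt one_lt_two)
  have hbound : ∀ n, G t ≤ C ^ (t - d n) * (G 1 ^ d n * G 0 ^ (1 - d n)) := fun n =>
    (hgrowth _ _ (by positivity) (hd_le n)).trans <| mul_le_mul_of_nonneg_left
      (le_rpow_mul_rpow_of_sq_midpoint_le_dyadic hG hmid n _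
        (Nat.floor_le_of_le (by push_cast; exact mul_le_of_le_one_left (by positivity) ht1.le)))
      (by positivity)
  have hcont : ContinuousAt (fun s => C ^ (t - s) * (G 1 ^ s * G 0 ^ (1 - s))) t :=
    (continuousAt_const.rpow (continuousAt_const.sub continuousAt_id) (.inl hC.ne')).mul
      ((continuousAt_const.rpow continuousAt_id (.inr ht0)).mul
        (continuousAt_const.rpow (continuousAt_const.sub continuousAt_id) (.inr (sub_pos.2 ht1))))
  simpa using ge_of_tendsto (hcont.tendsto.comp hd_tendsto) (Eventually.of_forall hbound)

theorem spectralRadius_mul_comm {𝕜 A : Type*} [NormedField 𝕜] [Ring A] [Algebra 𝕜 A] (x y : A) :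
    spectralRadius 𝕜 (x * y) = spectralRadius 𝕜 (y * x) := by
  suffices h : ∀ x y : A, spectralRadius 𝕜 (x * y) ≤ spectralRadius 𝕜 (y * x) from
    (h x y).antisymm (h y x)
  intro x y
  refine iSup₂_le fun k hk => ?_
  rcases eq_or_ne k 0 with rfl | hk0
  · simp
  · have : k ∈ spectrum 𝕜 (y * x) \ {0} := spectrum.nonzero_mul_comm (𝕜 := 𝕜) x y ▸ ⟨hk, hk0⟩
    exact le_iSup₂ (f := fun k _ => (‖k‖₊ : ℝ≥0∞)) k this.1

theorem sq_norm_mul_mul_le_of_mul_self_eq {A : Type*} [CStarAlgebra A] {b c e : A} (V : A)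
    (hb : IsSelfAdjoint b) (he : IsSelfAdjoint e) (hbc : e * e = b * c) (hcb : e * e = c * b) :
    ‖e * V * e‖ ^ 2 ≤ ‖b * V * b‖ * ‖c * V * c‖ := by
  nontriviality A
  have hsq : (‖e * V * e‖₊ ^ 2 : ℝ≥0∞) ≤ ‖c * V * c‖₊ * ‖b * V * b‖₊ := calc
    (‖e * V * e‖₊ ^ 2 : ℝ≥0∞) = spectralRadius ℂ (star (e * V * e) * (e * V * e)) := by
      rw [(IsSelfAdjoint.star_mul_self _).spectralRadius_eq_nnnorm,
        CStarRing.nnnorm_star_mul_self, sq, ENNReal.coe_mul]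
    _ = spectralRadius ℂ (e * (star V * (e * e) * V * e)) := by
      simp only [star_mul, he.star_eq, mul_assoc]
    _ = spectralRadius ℂ ((star V * b) * (c * V * c * b)) := by
      rw [spectralRadius_mul_comm]
      congr 1
      calc star V * (e * e) * V * e * e = star V * (e * e) * V * (e * e) := by
            simp only [mul_assoc]
        _ = star V * (b * c) * V * (c * b) := by rw [← hbc, ← hcb]
        _ = star V * b * (c * V * c * b) := by simp only [mul_assoc]
    _ = spectralRadius ℂ ((c * V * c) * star (b * V * b)) := by
      rw [spectralRadius_mul_comm]
      simp only [star_mul, hb.star_eq, mul_assoc]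
    _ ≤ ‖c * V * c‖₊ * ‖b * V * b‖₊ := by
      refine (spectrum.spectralRadius_le_nnnorm _).trans ?_
      rw [← ENNReal.coe_mul, ENNReal.coe_le_coe, ← nnnorm_star (b * V * b)]
      exact nnnorm_mul_le _ _
  rw [mul_comm]
  exact_mod_cast hsq

theorem CFC.rpow_add_of_nonneg {A : Type*} [PartialOrder A] [Ring A] [StarRing A]
    [TopologicalSpace A] [StarOrderedRing A] [Algebra ℝ A]
    [ContinuousFunctionalCalculus ℝ A IsSelfAdjoint] [NonnegSpectrumClass ℝ A]
    (a : A) {x y : ℝ} (hx : 0 ≤ x) (hy : 0 ≤ y) : a ^ (x + y) = a ^ x * a ^ y := by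
  simp only [CFC.rpow_def]
  rw [← cfc_mul _ _ a (NNReal.continuous_rpow_const hx).continuousOn
    (NNReal.continuous_rpow_const hy).continuousOn]
  exact cfc_congr fun z _ => NNReal.rpow_add_of_nonneg z hx hy

section CStarAlgebra

variable {A : Type*} [CStarAlgebra A] [PartialOrder A] [StarOrderedRing A]

theorem CFC.norm_rpow_le {a : A} (ha : 0 ≤ a) {r : ℝ} (hr : 0 ≤ r) : ‖a ^ r‖ ≤ ‖a‖ ^ r := by
  obtain _ | _ := subsingleton_or_nontrivial A
  · rw [Subsingleton.elim (a ^ r) 0, norm_zero]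
    positivity
  rcases hr.eq_or_lt with rfl | hr
  · simp [CFC.rpow_zero a ha]
  · exact (CFC.norm_rpow a hr ha).le

-- Real exponents, because `a ^ (0 : ℝ) = 1` is needed at `s = 0`, while `CFC.nnrpow a 0 = 0`.
theorem CStarAlgebra.norm_rpow_mul_mul_rpow_le {a : A} (ha : 0 ≤ a) (V : A) {t : ℝ}
    (ht0 : 0 ≤ t) (ht1 : t ≤ 1) : ‖a ^ t * V * a ^ t‖ ≤ ‖a * V * a‖ ^ t * ‖V‖ ^ (1 - t) := by
  have hmul : ∀ s r : ℝ, 0 ≤ s → 0 ≤ r → a ^ s * a ^ r = a ^ (s + r) := fun s r hs hr =>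
    (CFC.rpow_add_of_nonneg a hs hr).symm
  -- `1 + ‖a‖` rather than `‖a‖` keeps `C` positive
  have hG := le_rpow_mul_rpow_of_sq_midpoint_le (G := fun s => ‖a ^ s * V * a ^ s‖)
    (C := (1 + ‖a‖) ^ 2) (by positivity) (fun _ => norm_nonneg _) ?midpoint ?growth ht0 ht1
  · simpa [CFC.rpow_one a ha, CFC.rpow_zero a ha] using hG
  case midpoint =>
    intro s r hs hr
    have hm : a ^ ((s + r) / 2) * a ^ ((s + r) / 2) = a ^ (s + r) := by
      rw [hmul _ _ (by positivity) (by positivity), add_halves]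
    exact sq_norm_mul_mul_le_of_mul_self_eq V CFC.rpow_nonneg.isSelfAdjoint
      CFC.rpow_nonneg.isSelfAdjoint (by rw [hm, hmul s r hs hr])
      (by rw [hm, hmul r s hr hs, add_comm])
  case growth =>
    intro d t hd hdt
    have hε : 0 ≤ t - d := sub_nonneg.2 hdt
    have hpow : ‖a ^ (t - d)‖ ≤ (1 + ‖a‖) ^ (t - d) :=
      (CFC.norm_rpow_le ha hε).trans (Real.rpow_le_rpow (norm_nonneg a) (by linarith) hε)
    calc ‖a ^ t * V * a ^ t‖ = ‖a ^ (t - d) * (a ^ d * V * a ^ d) * a ^ (t - d)‖ := by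
          have h1 : a ^ t = a ^ (t - d) * a ^ d := by rw [hmul _ _ hε hd, sub_add_cancel]
          have h2 : a ^ t = a ^ d * a ^ (t - d) := by rw [hmul _ _ hd hε, add_sub_cancel]
          nth_rw 1 [h1]
          nth_rw 1 [h2]
          simp only [mul_assoc]
      _ ≤ ‖a ^ (t - d)‖ * ‖a ^ d * V * a ^ d‖ * ‖a ^ (t - d)‖ := norm_mul₃_le
      _ ≤ (1 + ‖a‖) ^ (t - d) * ‖a ^ d * V * a ^ d‖ * (1 + ‖a‖) ^ (t - d) := by gcongr
      _ = ((1 + ‖a‖) ^ 2) ^ (t - d) * ‖a ^ d * V * a ^ d‖ := by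
          rw [← Real.rpow_pow_comm (by positivity)]
          ring

end CStarAlgebra

theorem opAbs_nonneg (T : H →L[ℂ] H) : 0 ≤ opAbs T := CFC.sqrt_nonneg _

theorem opAbs_mul_self (T : H →L[ℂ] H) : opAbs T * opAbs T = adjoint T * T :=
  CFC.sqrt_mul_sqrt_self _ (by rw [← star_eq_adjoint]; exact star_mul_self_nonneg T)

theorem norm_opAbs_apply (T : H →L[ℂ] H) (x : H) : ‖opAbs T x‖ = ‖T x‖ := by
  have h := apply_norm_sq_eq_inner_adjoint_left (opAbs T) x
  rw [(opAbs_nonneg T).isSelfAdjoint.adjoint_eq, ← mul_def, opAbs_mul_self, mul_def,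
    ← apply_norm_sq_eq_inner_adjoint_left] at h
  exact (sq_eq_sq₀ (norm_nonneg _) (norm_nonneg _)).1 h

theorem norm_opAbs_mul (T X : H →L[ℂ] H) : ‖opAbs T * X‖ = ‖T * X‖ := by
  rw [← sq_eq_sq₀ (norm_nonneg _) (norm_nonneg _), sq, sq, ← CStarRing.norm_star_mul_self,
    ← CStarRing.norm_star_mul_self]
  congr 1
  calc star (opAbs T * X) * (opAbs T * X) = star X * (opAbs T * opAbs T) * X := by
        simp only [star_mul, (opAbs_nonneg T).isSelfAdjoint.star_eq, mul_assoc]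
    _ = star (T * X) * (T * X) := by
        simp only [opAbs_mul_self, star_mul, star_eq_adjoint, mul_assoc]

theorem ker_opAbs (T : H →L[ℂ] H) : (opAbs T).ker = T.ker := by
  ext x
  simp only [LinearMap.mem_ker, coe_coe]
  rw [← norm_eq_zero, norm_opAbs_apply, norm_eq_zero]

theorem ContinuousLinearMap.norm_le_one_of_norm_map_orthogonal_ker {𝕜 E F : Type*} [RCLike 𝕜]
    [NormedAddCommGroup E] [InnerProductSpace 𝕜 E] [CompleteSpace E] [NormedAddCommGroup F]
    [InnerProductSpace 𝕜 F] (U : E →L[𝕜] F) (hU : ∀ y ∈ U.kerᗮ, ‖U y‖ = ‖y‖) : ‖U‖ ≤ 1 := by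
  refine opNorm_le_bound _ zero_le_one fun x => ?_
  set P := U.kerᗮ.starProjection
  have hker : U (x - P x) = 0 := by
    have h := U.kerᗮ.sub_starProjection_mem_orthogonal x
    rw [Submodule.orthogonal_orthogonal_eq_closure,
      (isClosed_ker U).submodule_topologicalClosure_eq] at h
    exact h
  calc ‖U x‖ = ‖U (P x)‖ := by
        nth_rw 1 [← sub_add_cancel x (P x)]
        rw [map_add, hker, zero_add]
    _ = ‖P x‖ := hU _ (U.kerᗮ.starProjection_apply_mem x)
    _ ≤ 1 * ‖x‖ := by rw [one_mul]; exact U.kerᗮ.norm_starProjection_apply_le x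

theorem norm_le_one_of_eq_mul_opAbs (T U : H →L[ℂ] H) (hU : T = U * opAbs T)
    (hker : LinearMap.ker (U : H →ₗ[ℂ] H) = LinearMap.ker (T : H →ₗ[ℂ] H)) : ‖U‖ ≤ 1 := by
  refine U.norm_le_one_of_norm_map_orthogonal_ker fun y hy => ?_
  rw [hker, ← ker_opAbs, orthogonal_ker, (opAbs_nonneg T).isSelfAdjoint.adjoint_eq,
    ← SetLike.mem_coe, Submodule.topologicalClosure_coe] at hy
  refine closure_minimal ?_ (isClosed_eq (continuous_norm.comp U.continuous) continuous_norm) hy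
  rintro _ ⟨x, rfl⟩
  show ‖U (opAbs T x)‖ = ‖opAbs T x‖
  rw [norm_opAbs_apply, DFunLike.congr_fun hU x]
  rfl

theorem aluthge_eq_rpow (T U : H →L[ℂ] H) {t : ℝ≥0} (ht0 : 0 < t) (ht : t ≤ 1 / 2) :
    aluthge T U t =
      opAbs T ^ (t : ℝ) * U * opAbs T ^ (t : ℝ) * opAbs T ^ (1 - 2 * (t : ℝ)) := by
  have ht' : (t : ℝ) ≤ 1 / 2 := by exact_mod_cast ht
  have h1t : 0 < 1 - t := tsub_pos_of_lt (ht.trans_lt (by norm_num))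
  rw [aluthge, CFC.nnrpow_eq_pow, CFC.nnrpow_eq_pow, CFC.nnrpow_eq_rpow ht0,
    CFC.nnrpow_eq_rpow h1t, mul_assoc (opAbs T ^ (t : ℝ) * U),
    ← CFC.rpow_add_of_nonneg _ t.coe_nonneg (by linarith), NNReal.coe_sub (ht.trans (by norm_num))]
  congr 2
  push_cast
  ring

/-- For t ∈ [0, 1/2], ‖T̃_t‖ ≤ ‖T²‖^t ‖T‖^{1-2t}. -/
theorem norm_aluthge_le_of_le_half (T U : H →L[ℂ] H)
    (hU : T = U * opAbs T) (hker : LinearMap.ker (U : H →ₗ[ℂ] H) = LinearMap.ker (T : H →ₗ[ℂ] H))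
    (t : ℝ≥0) (ht : t ≤ 1 / 2) :
    ‖aluthge T U t‖ ≤ ‖T ^ 2‖ ^ (t : ℝ) * ‖T‖ ^ (1 - 2 * (t : ℝ)) := by
  rcases eq_zero_or_pos t with rfl | ht0
  · -- `CFC.nnrpow a 0 = 0`, so `aluthge T U 0 = 0`
    simp only [aluthge, CFC.nnrpow_eq_pow, CFC.nnrpow_zero, zero_mul, norm_zero]
    positivity
  have ht' : (t : ℝ) ≤ 1 / 2 := by exact_mod_cast ht
  have hmid : ‖opAbs T * U * opAbs T‖ = ‖T ^ 2‖ := by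
    rw [mul_assoc, norm_opAbs_mul, ← hU, sq]
  have hnorm : ‖opAbs T‖ = ‖T‖ := by simpa using norm_opAbs_mul T 1
  have hU1 : ‖U‖ ^ (1 - (t : ℝ)) ≤ 1 :=
    Real.rpow_le_one (norm_nonneg U) (norm_le_one_of_eq_mul_opAbs T U hU hker) (by linarith)
  rw [aluthge_eq_rpow T U ht0 ht]
  calc _ ≤ ‖opAbs T ^ (t : ℝ) * U * opAbs T ^ (t : ℝ)‖ * ‖opAbs T ^ (1 - 2 * (t : ℝ))‖ :=
        norm_mul_le _ _
    _ ≤ (‖T ^ 2‖ ^ (t : ℝ) * ‖U‖ ^ (1 - (t : ℝ))) * ‖T‖ ^ (1 - 2 * (t : ℝ)) := by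
        rw [← hmid, ← hnorm]
        gcongr
        · exact CStarAlgebra.norm_rpow_mul_mul_rpow_le (opAbs_nonneg T) U t.coe_nonneg (by linarith)
        · exact CFC.norm_rpow_le (opAbs_nonneg T) (by linarith)
    _ ≤ ‖T ^ 2‖ ^ (t : ℝ) * ‖T‖ ^ (1 - 2 * (t : ℝ)) := by
        gcongr
        exact mul_le_of_le_one_right (by positivity) hU1
end

section
/- For a bounded linear operator T on a complex Hilbert space, w(T)² ≤ (1/2)·[ ‖T²‖^{1/2}·((1/2)‖T‖ + (1/2)‖T²‖^{1/2}) + (1/2)‖T*T + TT*‖ ]. -/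
open scoped NNReal ENNReal
open ContinuousLinearMap

set_option synthInstance.maxHeartbeats 1000000
set_option maxHeartbeats 1000000


variable {H : Type*} [NormedAddCommGroup H] [InnerProductSpace ℂ H] [CompleteSpace H]

/-!
The bound follows from the sharper `w(T)² ≤ ½‖T²‖ + ¼‖T*T + TT*‖`, because `‖T²‖^{1/2} ≤ ‖T‖`.
For a unit vector `x`, pick a unimodular `u` with `u⟪Tx, x⟫ = |⟪Tx, x⟫|`. The self-adjoint operator
`S = ūT + uT*` then has `⟪Sx, x⟫ = 2|⟪Tx, x⟫|`, while the C*-identity gives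
`‖S‖² = ‖S²‖ ≤ ‖T*T + TT*‖ + 2‖T²‖`.
-/

theorem Complex.exists_norm_eq_one_mul_eq_norm (c : ℂ) : ∃ u : ℂ, ‖u‖ = 1 ∧ u * c = ‖c‖ := by
  refine ⟨Complex.exp (-(c.arg : ℂ) * Complex.I), ?_, ?_⟩
  · simpa using Complex.norm_exp_ofReal_mul_I (-c.arg)
  · conv_lhs => rw [← Complex.norm_mul_exp_arg_mul_I c]
    rw [mul_left_comm, ← Complex.exp_add]
    simp

section CStar
variable {A : Type*} [NonUnitalNormedRing A] [StarRing A] [CStarRing A] [NormedSpace ℂ A]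
  [IsScalarTower ℂ A A] [SMulCommClass ℂ A A] [StarModule ℂ A]

theorem norm_star_smul_add_smul_star_sq_le (a : A) {u : ℂ} (hu : ‖u‖ = 1) :
    ‖star u • a + u • star a‖ ^ 2 ≤ ‖star a * a + a * star a‖ + 2 * ‖a * a‖ := by
  have hunit : star u * u = 1 := by
    rw [Complex.star_def, Complex.conj_mul', hu]; simp
  have hsa : IsSelfAdjoint (star u • a + u • star a) := by
    simp [IsSelfAdjoint, star_add, star_smul, add_comm]
  have hsq : (star u • a + u • star a) * (star u • a + u • star a)
      = (star u * star u) • (a * a) + (star a * a + a * star a) + (u * u) • (star a * star a) := by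
    simp only [add_mul, mul_add, smul_mul_smul_comm, mul_comm u (star u), hunit, one_smul]
    abel
  calc ‖star u • a + u • star a‖ ^ 2
      = ‖(star u • a + u • star a) * (star u • a + u • star a)‖ := by
        rw [hsa.norm_mul_self]
    _ ≤ ‖(star u * star u) • (a * a)‖ + ‖star a * a + a * star a‖ + ‖(u * u) • (star a * star a)‖ := by
        rw [hsq]; exact norm_add₃_le
    _ = ‖star a * a + a * star a‖ + 2 * ‖a * a‖ := by
        rw [norm_smul, norm_smul, ← star_mul a a, norm_star]
        simp [hu]; ring

end CStar

section Hilbert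
variable {E : Type*} [NormedAddCommGroup E] [InnerProductSpace ℂ E]

theorem ContinuousLinearMap.norm_inner_apply_self_le (A : E →L[ℂ] E) {x : E} (hx : ‖x‖ = 1) :
    ‖(inner ℂ (A x) x : ℂ)‖ ≤ ‖A‖ :=
  calc ‖(inner ℂ (A x) x : ℂ)‖ ≤ ‖A x‖ * ‖x‖ := norm_inner_le_norm _ _
    _ ≤ ‖A‖ * ‖x‖ * ‖x‖ := by gcongr; exact A.le_opNorm x
    _ = ‖A‖ := by rw [hx, mul_one, mul_one]

theorem numRadius_nonneg (T : E →L[ℂ] E) : 0 ≤ numRadius T :=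
  Real.iSup_nonneg fun _ => norm_nonneg _

theorem numRadius_le {T : E →L[ℂ] E} {C : ℝ} (hC : 0 ≤ C)
    (h : ∀ x : E, ‖x‖ = 1 → ‖(inner ℂ (T x) x : ℂ)‖ ≤ C) : numRadius T ≤ C :=
  Real.iSup_le (fun x => h x.1 x.2) hC

end Hilbert

theorem ContinuousLinearMap.norm_inner_apply_self_sq_le (T : H →L[ℂ] H) {x : H} (hx : ‖x‖ = 1) :
    ‖(inner ℂ (T x) x : ℂ)‖ ^ 2 ≤ (1 / 2) * ‖T ^ 2‖ + (1 / 4) * ‖adjoint T * T + T * adjoint T‖ := by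
  set c : ℂ := inner ℂ (T x) x
  obtain ⟨u, hu, huc⟩ := Complex.exists_norm_eq_one_mul_eq_norm c
  have hinner : (inner ℂ ((star u • T + u • adjoint T) x) x : ℂ) = 2 * ‖c‖ := by
    have hconj : (inner ℂ (adjoint T x) x : ℂ) = star c := by
      rw [adjoint_inner_left, ← inner_conj_symm]; rfl
    rw [add_apply, smul_apply, smul_apply, inner_add_left, inner_smul_left, inner_smul_left, hconj]
    change star (star u) * c + star u * star c = _
    rw [star_star, ← star_mul', huc, Complex.star_def, Complex.conj_ofReal]
    ring
  have hle : 2 * ‖c‖ ≤ ‖star u • T + u • adjoint T‖ :=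
    calc 2 * ‖c‖ = ‖(inner ℂ ((star u • T + u • adjoint T) x) x : ℂ)‖ := by rw [hinner]; simp
      _ ≤ _ := norm_inner_apply_self_le _ hx
  have hcstar := norm_star_smul_add_smul_star_sq_le T hu
  rw [star_eq_adjoint, ← sq] at hcstar
  nlinarith [norm_nonneg c]

theorem numRadius_sq_le (T : H →L[ℂ] H) :
    numRadius T ^ 2 ≤ (1 / 2) * ‖T ^ 2‖ + (1 / 4) * ‖adjoint T * T + T * adjoint T‖ := by
  have hM : 0 ≤ (1 / 2) * ‖T ^ 2‖ + (1 / 4) * ‖adjoint T * T + T * adjoint T‖ := by positivity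
  rw [← Real.le_sqrt (numRadius_nonneg T) hM]
  exact numRadius_le (Real.sqrt_nonneg _) fun x hx =>
    Real.le_sqrt_of_sq_le (T.norm_inner_apply_self_sq_le hx)

/-- w(T)² ≤ (1/2)[‖T²‖^{1/2}((1/2)‖T‖ + (1/2)‖T²‖^{1/2}) + (1/2)‖T*T+TT*‖]. -/
theorem numRadius_sq_le_corollary_bound (T : H →L[ℂ] H) :
    numRadius T ^ 2 ≤ (1 / 2) * (‖T ^ 2‖ ^ ((1 : ℝ) / 2)
        * ((1 / 2) * ‖T‖ + (1 / 2) * ‖T ^ 2‖ ^ ((1 : ℝ) / 2))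
      + (1 / 2) * ‖adjoint T * T + T * adjoint T‖) := by
  rw [← Real.sqrt_eq_rpow]
  have hsq : √‖T ^ 2‖ ^ 2 = ‖T ^ 2‖ := Real.sq_sqrt (norm_nonneg _)
  have hle : √‖T ^ 2‖ ≤ ‖T‖ := Real.sqrt_le_iff.mpr ⟨norm_nonneg T, norm_pow_le' T two_pos⟩
  nlinarith [numRadius_sq_le T, mul_le_mul_of_nonneg_left hle (Real.sqrt_nonneg ‖T ^ 2‖)]
end
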